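/- For a tetrahedron, the sum of the squared areas of the three pseudofaces (projections onto planes parallel to each opposite edge pair) equals the sum of the squared areas of the four faces: P² + Q² + R² = Δ₀² + Δ₁² + Δ₂² + Δ₃². -/

import Mathlib

/-! With `a, b, c` the edge vectors at `O` and `x = b × c`, `y = c × a`, `z = a × b`, the three
pseudoface vectors are `-(y + z)`, `-(z + x)`, `-(x + y)` and the face opposite `O` has vector
`x + y + z`. The theorem is then the inner product space identity
`‖y + z‖² + ‖z + x‖² + ‖x + y‖² = ‖x + y + z‖² + ‖x‖² + ‖y‖² + ‖z‖²`, both sides expanding to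
`2 (‖x‖² + ‖y‖² + ‖z‖²) + 2 (⟪x, y⟫ + ⟪y, z⟫ + ⟪z, x⟫)`. -/

open RealInnerProductSpace

noncomputable def cross3 (u v : EuclideanSpace ℝ (Fin 3)) : EuclideanSpace ℝ (Fin 3) :=
  (WithLp.equiv 2 (Fin 3 → ℝ)).symm
    ![u 1 * v 2 - u 2 * v 1, u 2 * v 0 - u 0 * v 2, u 0 * v 1 - u 1 * v 0]

open Matrix

lemma cross3_eq_toLp_crossProduct (u v : EuclideanSpace ℝ (Fin 3)) :
    cross3 u v = WithLp.toLp 2 (u.ofLp ⨯₃ v.ofLp) := by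
  rw [cross_apply]; rfl

lemma cross3_sub_left (u v w : EuclideanSpace ℝ (Fin 3)) :
    cross3 (u - v) w = cross3 u w - cross3 v w := by
  simp only [cross3_eq_toLp_crossProduct, WithLp.ofLp_sub, map_sub, LinearMap.sub_apply,
    WithLp.toLp_sub]

lemma cross3_sub_right (u v w : EuclideanSpace ℝ (Fin 3)) :
    cross3 u (v - w) = cross3 u v - cross3 u w := by
  simp only [cross3_eq_toLp_crossProduct, WithLp.ofLp_sub, map_sub, WithLp.toLp_sub]

lemma cross3_anticomm (u v : EuclideanSpace ℝ (Fin 3)) : cross3 v u = -cross3 u v := by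
  rw [cross3_eq_toLp_crossProduct, cross3_eq_toLp_crossProduct, ← cross_anticomm,
    WithLp.toLp_neg]

lemma cross3_self (u : EuclideanSpace ℝ (Fin 3)) : cross3 u u = 0 := by
  simp only [cross3_eq_toLp_crossProduct, cross_self, WithLp.toLp_zero]

lemma norm_add_sq_add_norm_add_sq_add_norm_add_sq {E : Type*} [NormedAddCommGroup E]
    [InnerProductSpace ℝ E] (x y z : E) :
    ‖y + z‖ ^ 2 + ‖z + x‖ ^ 2 + ‖x + y‖ ^ 2 = ‖x + y + z‖ ^ 2 + ‖x‖ ^ 2 + ‖y‖ ^ 2 + ‖z‖ ^ 2 := by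
  simp only [norm_add_sq_real, inner_add_left, real_inner_comm]
  ring

lemma cross3_sub_sub (a b c : EuclideanSpace ℝ (Fin 3)) :
    cross3 (b - a) (c - a) = cross3 b c + cross3 c a + cross3 a b := by
  rw [cross3_sub_left, cross3_sub_right, cross3_sub_right, cross3_self, cross3_anticomm b a,
    cross3_anticomm a c]
  abel

lemma cross3_sub_right_eq_neg_add (a b c : EuclideanSpace ℝ (Fin 3)) :
    cross3 a (c - b) = -(cross3 c a + cross3 a b) := by
  rw [cross3_sub_right, cross3_anticomm a c]
  abel

lemma sum_norm_sq_cross3_pseudofaces (a b c : EuclideanSpace ℝ (Fin 3)) :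
    ‖cross3 a (c - b)‖ ^ 2 + ‖cross3 b (a - c)‖ ^ 2 + ‖cross3 c (b - a)‖ ^ 2 =
      ‖cross3 (b - a) (c - a)‖ ^ 2 + ‖cross3 b c‖ ^ 2 + ‖cross3 c a‖ ^ 2
        + ‖cross3 a b‖ ^ 2 := by
  rw [cross3_sub_right_eq_neg_add a b c, cross3_sub_right_eq_neg_add b c a,
    cross3_sub_right_eq_neg_add c a b, cross3_sub_sub]
  simp only [norm_neg]
  exact norm_add_sq_add_norm_add_sq_add_norm_add_sq _ _ _

theorem sum_sq_pseudoface_areas_general (O A B C : EuclideanSpace ℝ (Fin 3))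
    (Δ₀ Δ₁ Δ₂ Δ₃ P Q R : ℝ)
    (hΔ₀ : Δ₀ = ‖cross3 (B - A) (C - A)‖ / 2)
    (hΔ₁ : Δ₁ = ‖cross3 (B - O) (C - O)‖ / 2)
    (hΔ₂ : Δ₂ = ‖cross3 (C - O) (A - O)‖ / 2)
    (hΔ₃ : Δ₃ = ‖cross3 (A - O) (B - O)‖ / 2)
    (hP : P = ‖cross3 (A - O) (C - B)‖ / 2)
    (hQ : Q = ‖cross3 (B - O) (A - C)‖ / 2)
    (hR : R = ‖cross3 (C - O) (B - A)‖ / 2) :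
    P^2 + Q^2 + R^2 = Δ₀^2 + Δ₁^2 + Δ₂^2 + Δ₃^2 := by
  have key := sum_norm_sq_cross3_pseudofaces (A - O) (B - O) (C - O)
  simp only [sub_sub_sub_cancel_right] at key
  subst hΔ₀ hΔ₁ hΔ₂ hΔ₃ hP hQ hR
  linear_combination key / 4

theorem sum_sq_pseudoface_areas (O A B C : EuclideanSpace ℝ (Fin 3))
    (h : AffineIndependent ℝ ![O, A, B, C]) (Δ₀ Δ₁ Δ₂ Δ₃ P Q R : ℝ)
    (hΔ₀ : Δ₀ = ‖cross3 (B - A) (C - A)‖ / 2)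
    (hΔ₁ : Δ₁ = ‖cross3 (B - O) (C - O)‖ / 2)
    (hΔ₂ : Δ₂ = ‖cross3 (C - O) (A - O)‖ / 2)
    (hΔ₃ : Δ₃ = ‖cross3 (A - O) (B - O)‖ / 2)
    (hP : P = ‖cross3 (A - O) (C - B)‖ / 2)
    (hQ : Q = ‖cross3 (B - O) (A - C)‖ / 2)
    (hR : R = ‖cross3 (C - O) (B - A)‖ / 2) :
    P^2 + Q^2 + R^2 = Δ₀^2 + Δ₁^2 + Δ₂^2 + Δ₃^2 :=
  sum_sq_pseudoface_areas_general O A B C Δ₀ Δ₁ Δ₂ Δ₃ P Q R hΔ₀ hΔ₁ hΔ₂ hΔ₃ hP hQ hR
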